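/- For every even i ≥ 0, both 2_i <^P_1 1_i and 3_i <^P_1 1_i hold; for every odd i ≥ 0, both 1_i <^P_1 2_i and 1_i <^P_1 3_i hold. -/
import Mathlib


/-- Values of three-player (more generally `N`-player) games: a leaf is an
unconditional win for the corresponding player, an internal node is the list of
values the player to move may choose from. -/
inductive GV : Type
  | leaf : ℕ → GV
  | node : List GV → GV
  deriving Repr

namespace GV

mutual
/-- Boolean equality on game values. -/
def beq : GV → GV → Bool
  | leaf a, leaf b => a == b
  | node l, node m => beqList l m
  | _, _ => false
def beqList : List GV → List GV → Bool
  | [], [] => true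
  | x :: xs, y :: ys => beq x y && beqList xs ys
  | _, _ => false
end

instance : BEq GV := ⟨beq⟩

/-- `x` is a guaranteed win for player `p`: every leaf of the tree is `p`. -/
inductive IsWin (p : ℕ) : GV → Prop
  | leaf : IsWin p (leaf p)
  | node {l : List GV} : (∀ x ∈ l, IsWin p x) → IsWin p (node l)

/-- `x` is a guaranteed loss for player `p`: no leaf of the tree is `p`. -/
inductive IsLoss (p : ℕ) : GV → Prop
  | leaf {a : ℕ} : a ≠ p → IsLoss p (leaf a)
  | node {l : List GV} : (∀ x ∈ l, IsLoss p x) → IsLoss p (node l)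

/-- The selfish relation `X ≤ₚ Y` ("X is weaker than or equal to Y from the
perspective of player p"): `X = Y`, or a value that is neither a guaranteed win
nor loss is below the guaranteed win `p`, or a guaranteed loss is below any
non-decided value, or the relation is inferred recursively from children. -/
inductive le (p : ℕ) : GV → GV → Prop
  | refl (x) : le p x x
  | winTop {x} : ¬ IsWin p x → ¬ IsLoss p x → le p x (leaf p)
  | lossBot {x y} : IsLoss p x → ¬ IsLoss p y → le p x y
  | left {xs : List GV} {y} : (∀ x ∈ xs, le p x y) → le p (node xs) y
  | pair {xs ys : List GV} : (∀ x ∈ xs, ∀ y ∈ ys, le p x y) → le p (node xs) (node ys)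

/-- Equality of values from player `p`'s perspective: mutual weakness. -/
def eqv (p : ℕ) (x y : GV) : Prop := le p x y ∧ le p y x

/-- `X <ₚ Y`: strictly weaker from player `p`'s perspective. -/
def lt (p : ℕ) (x y : GV) : Prop := le p x y ∧ ¬ eqv p x y

/-- Fuel-indexed version of the prudent relation `<ᴾₚ`. -/
def pLtF (p : ℕ) : ℕ → GV → GV → Prop
  | 0, x, y => lt p x y
  | n+1, node xs, node ys =>
      lt p (node xs) (node ys) ∨
      ((∀ a ∈ xs, ∀ b ∈ ys, pLtF p n a b ∨ (¬ pLtF p n a b ∧ ¬ pLtF p n b a)) ∧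
        ∃ a ∈ xs, ∃ b ∈ ys, pLtF p n a b)
  | _+1, x, y => lt p x y

/-- The prudent relation `X <ᴾₚ Y`: `X <ₚ Y`, or every pair of children is
prudently weaker or prudently incomparable, with at least one strictly
prudently weaker pair.  (The fuel `sizeOf x + sizeOf y` is large enough for
the recursion to have stabilised.) -/
def pLt (p : ℕ) (x y : GV) : Prop := pLtF p (sizeOf x + sizeOf y) x y

/-- Prudent incomparability `X ≄ᴾₚ Y`. -/
def pIncomp (p : ℕ) (x y : GV) : Prop := ¬ pLt p x y ∧ ¬ pLt p y x

/-- The simple value `a_i`:  `a_0 = a` and `a_{i+1} = [b_i, c_i]` with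
`{b,c} = {1,2,3} \ {a}`. -/
def simple : ℕ → ℕ → GV
  | a, 0 => leaf a
  | a, i+1 =>
    if a = 1 then node [simple 2 i, simple 3 i]
    else if a = 2 then node [simple 1 i, simple 3 i]
    else node [simple 1 i, simple 2 i]

/-- The player moving after player `p` in a three-player game. -/
def nextP (p : ℕ) : ℕ := p % 3 + 1

/-- The two players other than `p` in a three-player game. -/
def others (p : ℕ) : ℕ × ℕ :=
  if p = 1 then (2, 3) else if p = 2 then (1, 3) else (1, 2)

/-- Prudent reduction of a list of options by player `p`: options strictly
prudently weaker than another option are discarded, duplicates are merged,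
the incomparable pair `{b_i, c_i}` is exactly `p_{i+1}` and `p_{i+1}` absorbs
`b_i` and `c_i`, and a single remaining simple option is the value itself. -/
inductive pReduce (p : ℕ) : GV → GV → Prop
  | refl (x) : pReduce p x x
  | perm {l l' : List GV} {v} : l.Perm l' → pReduce p (node l') v → pReduce p (node l) v
  | dedup {x : GV} {t : List GV} {v} :
      pReduce p (node (x :: t)) v → pReduce p (node (x :: x :: t)) v
  | drop {x y : GV} {t : List GV} {v} : y ∈ t → pLt p x y →
      pReduce p (node t) v → pReduce p (node (x :: t)) v
  | singleton (a i : ℕ) : pReduce p (node [simple a i]) (simple a i)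
  | merge {i : ℕ} {t : List GV} {v} :
      pReduce p (node (simple p (i+1) :: t)) v →
      pReduce p (node (simple (others p).1 i :: simple (others p).2 i :: t)) v
  | absorb {i b : ℕ} {t : List GV} {v} :
      (b = (others p).1 ∨ b = (others p).2) →
      pReduce p (node (simple p (i+1) :: t)) v →
      pReduce p (node (simple p (i+1) :: simple b i :: t)) v

/-- Selfish reduction of a list of options by player `p`: options strictly
weaker (in the selfish sense `<ₚ`) than another option are discarded,
duplicates are merged, and a single remaining option is the value itself. -/
inductive sReduce (p : ℕ) : GV → GV → Prop
  | refl (x) : sReduce p x x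
  | perm {l l' : List GV} {v} : l.Perm l' → sReduce p (node l') v → sReduce p (node l) v
  | dedup {x : GV} {t : List GV} {v} :
      sReduce p (node (x :: t)) v → sReduce p (node (x :: x :: t)) v
  | drop {x y : GV} {t : List GV} {v} : y ∈ t → lt p x y →
      sReduce p (node t) v → sReduce p (node (x :: t)) v
  | singleton (a i : ℕ) : sReduce p (node [simple a i]) (simple a i)

/-- Bottom-up prudent evaluation of a game tree, `p` being the player to move
at the root: children are reduced from the next player's perspective, then
the list of options is prudently reduced by `p`. -/
inductive gameReduce : ℕ → GV → GV → Prop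
  | leaf (p a) : gameReduce p (leaf a) (leaf a)
  | node {p : ℕ} {l l' : List GV} {v} :
      l.length = l'.length →
      (∀ q ∈ l.zip l', gameReduce (nextP p) q.1 q.2) →
      pReduce p (node l') v → gameReduce p (node l) v

/-- A well-formed three-player game value: leaves in `{1,2,3}`, nonempty nodes. -/
inductive Valid : GV → Prop
  | leaf {a} : (a = 1 ∨ a = 2 ∨ a = 3) → Valid (leaf a)
  | node {l} : l ≠ [] → (∀ x ∈ l, Valid x) → Valid (node l)

/-- The game tree of `x` has depth (number of moves) at most `d`. -/
inductive DepthLe : GV → ℕ → Prop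
  | leaf (a d) : DepthLe (leaf a) d
  | node {l : List GV} {d} : (∀ x ∈ l, DepthLe x d) → DepthLe (node l) (d + 1)

/-- The indifferent-selfish relation `≤₁` for player 1, with the extra axiom
`2 =₁ 3`: player 1 does not distinguish which opponent wins. -/
inductive leI : GV → GV → Prop
  | refl (x) : leI x x
  | indiff23 : leI (leaf 2) (leaf 3)
  | indiff32 : leI (leaf 3) (leaf 2)
  | winTop {x} : ¬ IsWin 1 x → ¬ IsLoss 1 x → leI x (leaf 1)
  | lossBot {x y} : IsLoss 1 x → ¬ IsLoss 1 y → leI x y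
  | left {xs : List GV} {y} : (∀ x ∈ xs, leI x y) → leI (node xs) y
  | pair {xs ys : List GV} : (∀ x ∈ xs, ∀ y ∈ ys, leI x y) → leI (node xs) (node ys)

def eqI (x y : GV) : Prop := leI x y ∧ leI y x
def ltI (x y : GV) : Prop := leI x y ∧ ¬ eqI x y

/-- `n` nested singleton wraps around `x`. -/
def wrap : ℕ → GV → GV
  | 0, x => x
  | n+1, x => node [wrap n x]

/-! ### Three-player Clobber on a `1 × n` board.
A board is a list over `{0,1,2,3}`: `0` is an empty vertex, `i ≥ 1` a token of
player `i`.  A move clobbers an adjacent token of another player. -/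

/-- All boards resulting from a move of player `q` on board `b`. -/
def movesOf (b : List ℕ) (q : ℕ) : List (List ℕ) :=
  (List.range b.length).flatMap fun i =>
    (([i+1, i-1]).filter fun j =>
        decide (j < b.length) && decide (j ≠ i) && (b.getD i 0 == q) &&
        (b.getD j 0 != 0) && (b.getD j 0 != q)).map
      fun j => (b.set j q).set i 0

def canMove (b : List ℕ) (q : ℕ) : Bool := !(movesOf b q).isEmpty

/-- The first player, starting cyclically from `p`, who has a legal move
(players unable to move skip their turn). -/
def firstMover (b : List ℕ) (p : ℕ) : Option ℕ :=
  if canMove b p then some p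
  else if canMove b (nextP p) then some (nextP p)
  else if canMove b (nextP (nextP p)) then some (nextP (nextP p))
  else none

/-- A node all of whose (distinct) children are the single leaf `a` has value `a`. -/
def mkNode : List GV → GV
  | [leaf a] => leaf a
  | l => node l

/-- Bottom-up value of a Clobber position: `last` is the last player who moved;
if nobody can move the value is the leaf `last`, otherwise it is the list of
the distinct values of the moves of the next player able to move. -/
def clobberVal : ℕ → List ℕ → ℕ → ℕ → GV
  | 0, _, _, last => leaf last
  | fuel+1, b, p, last =>
    match firstMover b p with
    | none => leaf last
    | some q => mkNode (((movesOf b q).map fun b' => clobberVal fuel b' (nextP q) q).eraseDups)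

/-- The value of a Clobber board, player 1 moving first. -/
def clobber (b : List ℕ) : GV := clobberVal (b.length + 1) b 1 0

/-- Number of tokens on a board. -/
def tokens (b : List ℕ) : ℕ := (b.filter fun t => t ≠ 0).length

end GV

namespace GV

lemma simple1_succ (i : ℕ) : simple 1 (i+1) = node [simple 2 i, simple 3 i] := by
  simp [simple]
lemma simple2_succ (i : ℕ) : simple 2 (i+1) = node [simple 1 i, simple 3 i] := by
  simp [simple]
lemma simple3_succ (i : ℕ) : simple 3 (i+1) = node [simple 1 i, simple 2 i] := by
  simp [simple]
lemma simple_zero (a : ℕ) : simple a 0 = leaf a := rfl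

lemma simple_succ (b i : ℕ) : ∃ c d : ℕ,
    ((c = 2 ∧ d = 3) ∨ (c = 1 ∧ d = 3) ∨ (c = 1 ∧ d = 2)) ∧
    simple b (i+1) = node [simple c i, simple d i] := by
  by_cases h1 : b = 1
  · exact ⟨2, 3, Or.inl ⟨rfl, rfl⟩, by subst h1; exact simple1_succ i⟩
  · by_cases h2 : b = 2
    · exact ⟨1, 3, Or.inr (Or.inl ⟨rfl, rfl⟩), by subst h2; exact simple2_succ i⟩
    · exact ⟨1, 2, Or.inr (Or.inr ⟨rfl, rfl⟩), by simp [simple, h1, h2]⟩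

mutual
def hgt : GV → ℕ
  | leaf _ => 0
  | node l => hgtL l + 1
def hgtL : List GV → ℕ
  | [] => 0
  | x :: t => max (hgt x) (hgtL t)
end

lemma hgt_simple : ∀ i a, hgt (simple a i) = i := by
  intro i
  induction i with
  | zero => intro a; rfl
  | succ i ih =>
    intro a
    obtain ⟨c, d, _, h⟩ := simple_succ a i
    rw [h]
    simp [hgt, hgtL, ih]

lemma simple_ne_of_lt {a j b k : ℕ} (h : j < k) : simple a j ≠ simple b k := by
  intro he
  have := congrArg hgt he
  rw [hgt_simple, hgt_simple] at this
  omega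

lemma simple_ne : ∀ k, simple 1 k ≠ simple 2 k ∧ simple 1 k ≠ simple 3 k ∧
    simple 2 k ≠ simple 3 k := by
  intro k
  induction k with
  | zero => refine ⟨?_, ?_, ?_⟩ <;> simp [simple]
  | succ k ih =>
    obtain ⟨h12, h13, h23⟩ := ih
    rw [simple1_succ, simple2_succ, simple3_succ]
    refine ⟨?_, ?_, ?_⟩ <;> simp only [ne_eq, node.injEq, List.cons.injEq, and_true] <;>
      intro h <;> tauto

lemma isLoss_node_inv {p : ℕ} {l : List GV} (h : IsLoss p (node l)) : ∀ x ∈ l, IsLoss p x := by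
  cases h; assumption

lemma notLoss_leaf1 : ¬ IsLoss 1 (leaf 1) := by
  intro h; cases h with | leaf h => exact h rfl

lemma isLoss_leaf2 : IsLoss 1 (leaf 2) := IsLoss.leaf (by norm_num)
lemma isLoss_leaf3 : IsLoss 1 (leaf 3) := IsLoss.leaf (by norm_num)

lemma isLoss_11 : IsLoss 1 (simple 1 1) := by
  rw [simple1_succ]
  refine IsLoss.node ?_
  intro x hx
  rw [simple_zero, simple_zero] at hx
  simp only [List.mem_cons, List.mem_singleton, List.not_mem_nil, or_false] at hx
  rcases hx with rfl | rfl
  · exact isLoss_leaf2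
  · exact isLoss_leaf3

lemma notLoss_23 : ∀ j, ¬ IsLoss 1 (simple 2 (j+1)) ∧ ¬ IsLoss 1 (simple 3 (j+1)) := by
  intro j
  induction j with
  | zero =>
    constructor <;> intro h
    · rw [simple2_succ] at h
      exact notLoss_leaf1 (isLoss_node_inv h _ (by simp [simple_zero]))
    · rw [simple3_succ] at h
      exact notLoss_leaf1 (isLoss_node_inv h _ (by simp [simple_zero]))
  | succ j ih =>
    constructor <;> intro h
    · rw [simple2_succ] at h
      exact ih.2 (isLoss_node_inv h _ (by simp))
    · rw [simple3_succ] at h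
      exact ih.1 (isLoss_node_inv h _ (by simp))

lemma notLoss_1 : ∀ j, ¬ IsLoss 1 (simple 1 (j+2)) := by
  intro j h
  rw [simple1_succ] at h
  exact (notLoss_23 j).1 (isLoss_node_inv h _ (by simp))

/-- inversion for `le` with node on both sides -/
lemma le_node_node_inv {p : ℕ} {xs ys : List GV} (h : le p (node xs) (node ys)) :
    node xs = node ys ∨ IsLoss p (node xs) ∨ (∀ x ∈ xs, le p x (node ys)) ∨
    (∀ x ∈ xs, ∀ y ∈ ys, le p x y) := by
  cases h with
  | refl => exact Or.inl rfl
  | lossBot h _ => exact Or.inr (Or.inl h)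
  | left h => exact Or.inr (Or.inr (Or.inl h))
  | pair h => exact Or.inr (Or.inr (Or.inr h))

lemma le_leaf_node_inv {p a : ℕ} {ys : List GV} (h : le p (leaf a) (node ys)) :
    IsLoss p (leaf a) := by
  cases h with
  | lossBot h _ => exact h

lemma le_leaf_leaf_inv {p a b : ℕ} (h : le p (leaf a) (leaf b)) :
    a = b ∨ b = p ∨ (IsLoss p (leaf a) ∧ ¬ IsLoss p (leaf b)) := by
  cases h with
  | refl => exact Or.inl rfl
  | winTop _ _ => exact Or.inr (Or.inl rfl)
  | lossBot h h' => exact Or.inr (Or.inr ⟨h, h'⟩)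

lemma nle_of (p : ℕ) {xs ys : List GV} (hne : node xs ≠ node ys)
    (hnl : ¬ IsLoss p (node xs))
    (hleft : ∃ x ∈ xs, ¬ le p x (node ys)) (hpair : ∃ x ∈ xs, ∃ y ∈ ys, ¬ le p x y) :
    ¬ le p (node xs) (node ys) := by
  intro h
  rcases le_node_node_inv h with h | h | h | h
  · exact hne h
  · exact hnl h
  · obtain ⟨x, hx, hn⟩ := hleft; exact hn (h x hx)
  · obtain ⟨x, hx, y, hy, hn⟩ := hpair; exact hn (h x hx y hy)

lemma nonloss_child : ∀ a j, (a = 1 ∨ a = 2 ∨ a = 3) → ¬ IsLoss 1 (simple a (j+1)) →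
    ∃ c d g : ℕ, simple a (j+1) = node [simple c j, simple d j] ∧ (g = c ∨ g = d) ∧
      (g = 1 ∨ g = 2 ∨ g = 3) ∧ ¬ IsLoss 1 (simple g j) := by
  intro a j ha hnl
  rcases ha with rfl | rfl | rfl
  · cases j with
    | zero => exact absurd isLoss_11 hnl
    | succ j =>
      exact ⟨2, 3, 2, simple1_succ _, Or.inl rfl, by tauto, (notLoss_23 j).1⟩
  · cases j with
    | zero => exact ⟨1, 3, 1, simple2_succ _, Or.inl rfl, by tauto, notLoss_leaf1⟩
    | succ j =>
      exact ⟨1, 3, 3, simple2_succ _, Or.inr rfl, by tauto, (notLoss_23 j).2⟩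
  · cases j with
    | zero => exact ⟨1, 2, 1, simple3_succ _, Or.inl rfl, by tauto, notLoss_leaf1⟩
    | succ j =>
      exact ⟨1, 2, 2, simple3_succ _, Or.inr rfl, by tauto, (notLoss_23 j).1⟩

/-- cross-level: a non-loss simple value of lower level is never `≤₁` one of higher level -/
lemma CL : ∀ j k, j < k → ∀ a b : ℕ, (a = 1 ∨ a = 2 ∨ a = 3) →
    ¬ IsLoss 1 (simple a j) → ¬ le 1 (simple a j) (simple b k) := by
  intro j
  induction j using Nat.strong_induction_on with
  | _ j ih =>
    intro k hjk a b ha hnl h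
    obtain ⟨k', rfl⟩ : ∃ k', k = k' + 1 := ⟨k - 1, by omega⟩
    obtain ⟨c, d, hcd, hbk⟩ := simple_succ b k'
    rw [hbk] at h
    cases j with
    | zero =>
      rw [simple_zero] at h hnl
      exact hnl (le_leaf_node_inv h)
    | succ j' =>
      obtain ⟨c0, d0, g, hshape, hg, hg3, hgnl⟩ := nonloss_child a j' ha hnl
      rw [hshape] at h
      rcases le_node_node_inv h with h | h | h | h
      · rw [← hshape, ← hbk] at h
        exact simple_ne_of_lt hjk h
      · rw [← hshape] at h; exact hnl h
      · have hm : simple g j' ∈ [simple c0 j', simple d0 j'] := by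
          rcases hg with rfl | rfl <;> simp
        have := h _ hm
        rw [← hbk] at this
        exact ih j' (by omega) (k'+1) (by omega) g b hg3 hgnl this
      · have hm : simple g j' ∈ [simple c0 j', simple d0 j'] := by
          rcases hg with rfl | rfl <;> simp
        have := h _ hm (simple c k') (by simp)
        exact ih j' (by omega) k' (by omega) g c hg3 hgnl this

lemma LE : ∀ k,
    (¬ le 1 (simple 2 k) (simple 3 k)) ∧
    (¬ le 1 (simple 3 k) (simple 2 k)) ∧
    (1 ≤ k → ¬ le 1 (simple 2 k) (simple 1 k) ∧ ¬ le 1 (simple 3 k) (simple 1 k)) ∧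
    (k ≠ 1 → ¬ le 1 (simple 1 k) (simple 2 k) ∧ ¬ le 1 (simple 1 k) (simple 3 k)) := by
  intro k
  induction k with
  | zero =>
    refine ⟨?_, ?_, by omega, fun _ => ⟨?_, ?_⟩⟩ <;> rw [simple_zero, simple_zero] <;>
        intro h <;> rcases le_leaf_leaf_inv h with h | h | ⟨h1, h2⟩
    · exact absurd h (by norm_num)
    · exact absurd h (by norm_num)
    · exact h2 isLoss_leaf3
    · exact absurd h (by norm_num)
    · exact absurd h (by norm_num)
    · exact h2 isLoss_leaf2
    · exact absurd h (by norm_num)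
    · exact absurd h (by norm_num)
    · exact notLoss_leaf1 h1
    · exact absurd h (by norm_num)
    · exact absurd h (by norm_num)
    · exact notLoss_leaf1 h1
  | succ m ih =>
    obtain ⟨ih1, ih2, ih3, ih4⟩ := ih
    have c1 : ¬ le 1 (simple 2 (m+1)) (simple 3 (m+1)) := by
      rw [simple2_succ m, simple3_succ m]
      refine nle_of 1 ?_ ?_ ?_ ?_
      · rw [← simple2_succ m, ← simple3_succ m]; exact (simple_ne (m+1)).2.2
      · rw [← simple2_succ m]; exact (notLoss_23 m).1
      · cases m with
        | zero =>
          exact ⟨simple 1 0, by simp, by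
            rw [← simple3_succ 0]
            exact CL 0 1 one_pos 1 3 (by tauto) (by rw [simple_zero]; exact notLoss_leaf1)⟩
        | succ m' =>
          exact ⟨simple 3 (m'+1), by simp, by
            rw [← simple3_succ (m'+1)]
            exact CL (m'+1) (m'+2) (by omega) 3 3 (by tauto) (notLoss_23 m').2⟩
      · cases m with
        | zero => exact ⟨simple 1 0, by simp, simple 2 0, by simp, (ih4 (by omega)).1⟩
        | succ m' =>
          exact ⟨simple 3 (m'+1), by simp, simple 1 (m'+1), by simp, (ih3 (by omega)).2⟩
    have c2 : ¬ le 1 (simple 3 (m+1)) (simple 2 (m+1)) := by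
      rw [simple2_succ m, simple3_succ m]
      refine nle_of 1 ?_ ?_ ?_ ?_
      · rw [← simple2_succ m, ← simple3_succ m]; exact Ne.symm (simple_ne (m+1)).2.2
      · rw [← simple3_succ m]; exact (notLoss_23 m).2
      · cases m with
        | zero =>
          exact ⟨simple 1 0, by simp, by
            rw [← simple2_succ 0]
            exact CL 0 1 one_pos 1 2 (by tauto) (by rw [simple_zero]; exact notLoss_leaf1)⟩
        | succ m' =>
          exact ⟨simple 2 (m'+1), by simp, by
            rw [← simple2_succ (m'+1)]
            exact CL (m'+1) (m'+2) (by omega) 2 2 (by tauto) (notLoss_23 m').1⟩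
      · cases m with
        | zero => exact ⟨simple 1 0, by simp, simple 3 0, by simp, (ih4 (by omega)).2⟩
        | succ m' =>
          exact ⟨simple 2 (m'+1), by simp, simple 1 (m'+1), by simp, (ih3 (by omega)).1⟩
    have c3a : ¬ le 1 (simple 2 (m+1)) (simple 1 (m+1)) := by
      rw [simple2_succ m, simple1_succ m]
      refine nle_of 1 ?_ ?_ ?_ ?_
      · rw [← simple2_succ m, ← simple1_succ m]; exact Ne.symm (simple_ne (m+1)).1
      · rw [← simple2_succ m]; exact (notLoss_23 m).1
      · cases m with
        | zero =>
          exact ⟨simple 1 0, by simp, by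
            rw [← simple1_succ 0]
            exact CL 0 1 one_pos 1 1 (by tauto) (by rw [simple_zero]; exact notLoss_leaf1)⟩
        | succ m' =>
          exact ⟨simple 3 (m'+1), by simp, by
            rw [← simple1_succ (m'+1)]
            exact CL (m'+1) (m'+2) (by omega) 3 1 (by tauto) (notLoss_23 m').2⟩
      · cases m with
        | zero => exact ⟨simple 1 0, by simp, simple 2 0, by simp, (ih4 (by omega)).1⟩
        | succ m' =>
          exact ⟨simple 3 (m'+1), by simp, simple 2 (m'+1), by simp, ih2⟩
    have c3b : ¬ le 1 (simple 3 (m+1)) (simple 1 (m+1)) := by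
      rw [simple3_succ m, simple1_succ m]
      refine nle_of 1 ?_ ?_ ?_ ?_
      · rw [← simple3_succ m, ← simple1_succ m]; exact Ne.symm (simple_ne (m+1)).2.1
      · rw [← simple3_succ m]; exact (notLoss_23 m).2
      · cases m with
        | zero =>
          exact ⟨simple 1 0, by simp, by
            rw [← simple1_succ 0]
            exact CL 0 1 one_pos 1 1 (by tauto) (by rw [simple_zero]; exact notLoss_leaf1)⟩
        | succ m' =>
          exact ⟨simple 2 (m'+1), by simp, by
            rw [← simple1_succ (m'+1)]
            exact CL (m'+1) (m'+2) (by omega) 2 1 (by tauto) (notLoss_23 m').1⟩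
      · cases m with
        | zero => exact ⟨simple 1 0, by simp, simple 2 0, by simp, (ih4 (by omega)).1⟩
        | succ m' =>
          exact ⟨simple 2 (m'+1), by simp, simple 3 (m'+1), by simp, ih1⟩
    refine ⟨c1, c2, fun _ => ⟨c3a, c3b⟩, fun hk => ?_⟩
    obtain ⟨m', rfl⟩ : ∃ m', m = m' + 1 := ⟨m - 1, by omega⟩
    constructor
    · rw [simple1_succ (m'+1), simple2_succ (m'+1)]
      refine nle_of 1 ?_ ?_ ?_ ?_
      · rw [← simple1_succ (m'+1), ← simple2_succ (m'+1)]; exact (simple_ne (m'+2)).1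
      · rw [← simple1_succ (m'+1)]; exact notLoss_1 m'
      · exact ⟨simple 2 (m'+1), by simp, by
          rw [← simple2_succ (m'+1)]
          exact CL (m'+1) (m'+2) (by omega) 2 2 (by tauto) (notLoss_23 m').1⟩
      · exact ⟨simple 2 (m'+1), by simp, simple 1 (m'+1), by simp, (ih3 (by omega)).1⟩
    · rw [simple1_succ (m'+1), simple3_succ (m'+1)]
      refine nle_of 1 ?_ ?_ ?_ ?_
      · rw [← simple1_succ (m'+1), ← simple3_succ (m'+1)]; exact (simple_ne (m'+2)).2.1
      · rw [← simple1_succ (m'+1)]; exact notLoss_1 m'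
      · exact ⟨simple 2 (m'+1), by simp, by
          rw [← simple3_succ (m'+1)]
          exact CL (m'+1) (m'+2) (by omega) 2 3 (by tauto) (notLoss_23 m').1⟩
      · exact ⟨simple 2 (m'+1), by simp, simple 1 (m'+1), by simp, (ih3 (by omega)).1⟩

lemma sizeOf_pos (x : GV) : 1 ≤ sizeOf x := by
  cases x <;> simp <;> omega

/-- the пair condition in the prudent relation -/
def Cond (r : GV → GV → Prop) (xs ys : List GV) : Prop :=
  (∀ a ∈ xs, ∀ b ∈ ys, r a b ∨ (¬ r a b ∧ ¬ r b a)) ∧ ∃ a ∈ xs, ∃ b ∈ ys, r a b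

lemma cond_congr {r r' : GV → GV → Prop} {xs ys : List GV}
    (h : ∀ a ∈ xs, ∀ b ∈ ys, (r a b ↔ r' a b) ∧ (r b a ↔ r' b a)) :
    Cond r xs ys ↔ Cond r' xs ys := by
  unfold Cond
  constructor
  · rintro ⟨h1, a, ha, b, hb, h2⟩
    refine ⟨fun a ha b hb => ?_, a, ha, b, hb, ((h a ha b hb).1).mp h2⟩
    rcases h1 a ha b hb with h' | ⟨h1', h2'⟩
    · exact Or.inl (((h a ha b hb).1).mp h')
    · exact Or.inr ⟨fun hc => h1' (((h a ha b hb).1).mpr hc),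
        fun hc => h2' (((h a ha b hb).2).mpr hc)⟩
  · rintro ⟨h1, a, ha, b, hb, h2⟩
    refine ⟨fun a ha b hb => ?_, a, ha, b, hb, ((h a ha b hb).1).mpr h2⟩
    rcases h1 a ha b hb with h' | ⟨h1', h2'⟩
    · exact Or.inl (((h a ha b hb).1).mpr h')
    · exact Or.inr ⟨fun hc => h1' (((h a ha b hb).1).mp hc),
        fun hc => h2' (((h a ha b hb).2).mp hc)⟩

lemma pLtF_succ_node (p n : ℕ) (xs ys : List GV) :
    pLtF p (n+1) (node xs) (node ys) ↔
      lt p (node xs) (node ys) ∨ Cond (pLtF p n) xs ys := Iff.rfl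

lemma pLtF_succ_leaf_left (p n a : ℕ) (y : GV) :
    pLtF p (n+1) (leaf a) y = lt p (leaf a) y := by
  cases y <;> rfl

lemma pLtF_succ_leaf_right (p n a : ℕ) (x : GV) :
    pLtF p (n+1) x (leaf a) = lt p x (leaf a) := by
  cases x <;> rfl

lemma pLtF_stable (p : ℕ) : ∀ n x y, sizeOf x + sizeOf y ≤ n →
    (pLtF p n x y ↔ pLt p x y) := by
  intro n
  induction n using Nat.strong_induction_on with
  | _ n ih =>
    intro x y hxy
    have hx := sizeOf_pos x
    have hy := sizeOf_pos y
    obtain ⟨n', rfl⟩ : ∃ n', n = n' + 1 := ⟨n - 1, by omega⟩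
    obtain ⟨S, hS⟩ : ∃ S, sizeOf x + sizeOf y = S + 1 := ⟨sizeOf x + sizeOf y - 1, by omega⟩
    unfold pLt
    rw [hS]
    cases x with
    | leaf a => rw [pLtF_succ_leaf_left, pLtF_succ_leaf_left]
    | node xs =>
      cases y with
      | leaf b => rw [pLtF_succ_leaf_right, pLtF_succ_leaf_right]
      | node ys =>
        rw [pLtF_succ_node, pLtF_succ_node]
        have hsz : ∀ a ∈ xs, ∀ b ∈ ys, sizeOf a + sizeOf b ≤ n' ∧ sizeOf a + sizeOf b ≤ S := by
          intro a ha b hb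
          have h1 : sizeOf a < sizeOf xs := List.sizeOf_lt_of_mem ha
          have h2 : sizeOf b < sizeOf ys := List.sizeOf_lt_of_mem hb
          have h3 : sizeOf (node xs) = 1 + sizeOf xs := by simp
          have h4 : sizeOf (node ys) = 1 + sizeOf ys := by simp
          omega
        have e1 : Cond (pLtF p n') xs ys ↔ Cond (pLt p) xs ys :=
          cond_congr (fun a ha b hb =>
            ⟨ih n' (by omega) a b (hsz a ha b hb).1,
             ih n' (by omega) b a (by have := (hsz a ha b hb).1; omega)⟩)
        have e2 : Cond (pLtF p S) xs ys ↔ Cond (pLt p) xs ys :=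
          cond_congr (fun a ha b hb =>
            ⟨ih S (by omega) a b (hsz a ha b hb).2,
             ih S (by omega) b a (by have := (hsz a ha b hb).2; omega)⟩)
        exact or_congr Iff.rfl (e1.trans e2.symm)

lemma pLt_leaf_left (p a : ℕ) (y : GV) : pLt p (leaf a) y ↔ lt p (leaf a) y := by
  unfold pLt
  obtain ⟨S, hS⟩ : ∃ S, sizeOf (leaf a) + sizeOf y = S + 1 :=
    ⟨sizeOf (leaf a) + sizeOf y - 1, by have := sizeOf_pos y; have := sizeOf_pos (leaf a); omega⟩
  rw [hS, pLtF_succ_leaf_left]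

lemma pLt_node_iff (p : ℕ) (xs ys : List GV) :
    pLt p (node xs) (node ys) ↔
      lt p (node xs) (node ys) ∨ Cond (pLt p) xs ys := by
  unfold pLt
  obtain ⟨S, hS⟩ : ∃ S, sizeOf (node xs) + sizeOf (node ys) = S + 1 :=
    ⟨sizeOf (node xs) + sizeOf (node ys) - 1,
      by have := sizeOf_pos (node xs); have := sizeOf_pos (node ys); omega⟩
  rw [hS, pLtF_succ_node]
  refine or_congr Iff.rfl (cond_congr ?_)
  intro a ha b hb
  have h1 : sizeOf a < sizeOf xs := List.sizeOf_lt_of_mem ha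
  have h2 : sizeOf b < sizeOf ys := List.sizeOf_lt_of_mem hb
  have h3 : sizeOf (node xs) = 1 + sizeOf xs := by simp
  have h4 : sizeOf (node ys) = 1 + sizeOf ys := by simp
  exact ⟨pLtF_stable p S a b (by omega), pLtF_stable p S b a (by omega)⟩

lemma main_table : ∀ i : ℕ,
    (Even i → pLt 1 (simple 2 i) (simple 1 i) ∧ pLt 1 (simple 3 i) (simple 1 i) ∧
      ¬ pLt 1 (simple 1 i) (simple 2 i) ∧ ¬ pLt 1 (simple 1 i) (simple 3 i)) ∧
    (Odd i → pLt 1 (simple 1 i) (simple 2 i) ∧ pLt 1 (simple 1 i) (simple 3 i) ∧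
      ¬ pLt 1 (simple 2 i) (simple 1 i) ∧ ¬ pLt 1 (simple 3 i) (simple 1 i)) ∧
    ¬ pLt 1 (simple 2 i) (simple 3 i) ∧ ¬ pLt 1 (simple 3 i) (simple 2 i) := by
  intro i
  induction i with
  | zero =>
    have n12 : ¬ le 1 (leaf 1) (leaf 2) := by
      have := ((LE 0).2.2.2 (by omega)).1; rwa [simple_zero, simple_zero] at this
    have n13 : ¬ le 1 (leaf 1) (leaf 3) := by
      have := ((LE 0).2.2.2 (by omega)).2; rwa [simple_zero, simple_zero] at this
    have n23 : ¬ le 1 (leaf 2) (leaf 3) := by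
      have := (LE 0).1; rwa [simple_zero, simple_zero] at this
    have n32 : ¬ le 1 (leaf 3) (leaf 2) := by
      have := (LE 0).2.1; rwa [simple_zero, simple_zero] at this
    refine ⟨fun _ => ?_, fun hod => by rcases hod with ⟨c, hc⟩; omega, ?_, ?_⟩
    · rw [simple_zero, simple_zero, simple_zero, pLt_leaf_left, pLt_leaf_left,
        pLt_leaf_left, pLt_leaf_left]
      refine ⟨⟨le.lossBot isLoss_leaf2 notLoss_leaf1, fun h => n12 h.2⟩,
        ⟨le.lossBot isLoss_leaf3 notLoss_leaf1, fun h => n13 h.2⟩,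
        fun h => n12 h.1, fun h => n13 h.1⟩
    · rw [simple_zero, simple_zero, pLt_leaf_left]
      exact fun h => n23 h.1
    · rw [simple_zero, simple_zero, pLt_leaf_left]
      exact fun h => n32 h.1
  | succ i ih =>
    obtain ⟨ihe, iho, I23, I32⟩ := ih
    have hle := LE (i+1)
    rcases Nat.even_or_odd i with he | ho
    · -- i even, i+1 odd
      obtain ⟨P21, P31, N12, N13⟩ := ihe he
      have g1 : pLt 1 (simple 1 (i+1)) (simple 2 (i+1)) := by
        rw [simple1_succ i, simple2_succ i, pLt_node_iff]
        refine Or.inr ⟨?_, simple 2 i, by simp, simple 1 i, by simp, P21⟩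
        intro a ha b hb
        simp only [List.mem_cons, List.mem_singleton, List.not_mem_nil, or_false] at ha hb
        rcases ha with rfl | rfl <;> rcases hb with rfl | rfl
        · exact Or.inl P21
        · exact Or.inr ⟨I23, I32⟩
        · exact Or.inl P31
        · by_cases h : pLt 1 (simple 3 i) (simple 3 i)
          · exact Or.inl h
          · exact Or.inr ⟨h, h⟩
      have g2 : pLt 1 (simple 1 (i+1)) (simple 3 (i+1)) := by
        rw [simple1_succ i, simple3_succ i, pLt_node_iff]
        refine Or.inr ⟨?_, simple 2 i, by simp, simple 1 i, by simp, P21⟩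
        intro a ha b hb
        simp only [List.mem_cons, List.mem_singleton, List.not_mem_nil, or_false] at ha hb
        rcases ha with rfl | rfl <;> rcases hb with rfl | rfl
        · exact Or.inl P21
        · by_cases h : pLt 1 (simple 2 i) (simple 2 i)
          · exact Or.inl h
          · exact Or.inr ⟨h, h⟩
        · exact Or.inl P31
        · exact Or.inr ⟨I32, I23⟩
      have g3 : ¬ pLt 1 (simple 2 (i+1)) (simple 1 (i+1)) := by
        rw [simple2_succ i, simple1_succ i, pLt_node_iff]
        rintro (h | h)
        · have hn := (hle.2.2.1 (by omega)).1
          rw [simple2_succ i, simple1_succ i] at hn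
          exact hn h.1
        · obtain ⟨hall, -⟩ := h
          have := hall (simple 1 i) (by simp) (simple 2 i) (by simp)
          rcases this with h' | ⟨-, h2⟩
          · exact N12 h'
          · exact h2 P21
      have g4 : ¬ pLt 1 (simple 3 (i+1)) (simple 1 (i+1)) := by
        rw [simple3_succ i, simple1_succ i, pLt_node_iff]
        rintro (h | h)
        · have hn := (hle.2.2.1 (by omega)).2
          rw [simple3_succ i, simple1_succ i] at hn
          exact hn h.1
        · obtain ⟨hall, -⟩ := h
          have := hall (simple 1 i) (by simp) (simple 2 i) (by simp)
          rcases this with h' | ⟨-, h2⟩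
          · exact N12 h'
          · exact h2 P21
      have g5 : ¬ pLt 1 (simple 2 (i+1)) (simple 3 (i+1)) := by
        rw [simple2_succ i, simple3_succ i, pLt_node_iff]
        rintro (h | h)
        · have hn := hle.1
          rw [simple2_succ i, simple3_succ i] at hn
          exact hn h.1
        · obtain ⟨hall, -⟩ := h
          have := hall (simple 1 i) (by simp) (simple 2 i) (by simp)
          rcases this with h' | ⟨-, h2⟩
          · exact N12 h'
          · exact h2 P21
      have g6 : ¬ pLt 1 (simple 3 (i+1)) (simple 2 (i+1)) := by
        rw [simple3_succ i, simple2_succ i, pLt_node_iff]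
        rintro (h | h)
        · have hn := hle.2.1
          rw [simple3_succ i, simple2_succ i] at hn
          exact hn h.1
        · obtain ⟨hall, -⟩ := h
          have := hall (simple 1 i) (by simp) (simple 3 i) (by simp)
          rcases this with h' | ⟨-, h2⟩
          · exact N13 h'
          · exact h2 P31
      exact ⟨fun hev => absurd he (Nat.even_add_one.mp hev),
        fun _ => ⟨g1, g2, g3, g4⟩, g5, g6⟩
    · -- i odd, i+1 even
      obtain ⟨P12, P13, N21, N31⟩ := iho ho
      have g1 : pLt 1 (simple 2 (i+1)) (simple 1 (i+1)) := by
        rw [simple2_succ i, simple1_succ i, pLt_node_iff]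
        refine Or.inr ⟨?_, simple 1 i, by simp, simple 2 i, by simp, P12⟩
        intro a ha b hb
        simp only [List.mem_cons, List.mem_singleton, List.not_mem_nil, or_false] at ha hb
        rcases ha with rfl | rfl <;> rcases hb with rfl | rfl
        · exact Or.inl P12
        · exact Or.inl P13
        · exact Or.inr ⟨I32, I23⟩
        · by_cases h : pLt 1 (simple 3 i) (simple 3 i)
          · exact Or.inl h
          · exact Or.inr ⟨h, h⟩
      have g2 : pLt 1 (simple 3 (i+1)) (simple 1 (i+1)) := by
        rw [simple3_succ i, simple1_succ i, pLt_node_iff]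
        refine Or.inr ⟨?_, simple 1 i, by simp, simple 2 i, by simp, P12⟩
        intro a ha b hb
        simp only [List.mem_cons, List.mem_singleton, List.not_mem_nil, or_false] at ha hb
        rcases ha with rfl | rfl <;> rcases hb with rfl | rfl
        · exact Or.inl P12
        · exact Or.inl P13
        · by_cases h : pLt 1 (simple 2 i) (simple 2 i)
          · exact Or.inl h
          · exact Or.inr ⟨h, h⟩
        · exact Or.inr ⟨I23, I32⟩
      have g3 : ¬ pLt 1 (simple 1 (i+1)) (simple 2 (i+1)) := by
        rw [simple1_succ i, simple2_succ i, pLt_node_iff]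
        rintro (h | h)
        · have hn := (hle.2.2.2 (by rcases ho with ⟨c, hc⟩; omega)).1
          rw [simple1_succ i, simple2_succ i] at hn
          exact hn h.1
        · obtain ⟨hall, -⟩ := h
          have := hall (simple 2 i) (by simp) (simple 1 i) (by simp)
          rcases this with h' | ⟨-, h2⟩
          · exact N21 h'
          · exact h2 P12
      have g4 : ¬ pLt 1 (simple 1 (i+1)) (simple 3 (i+1)) := by
        rw [simple1_succ i, simple3_succ i, pLt_node_iff]
        rintro (h | h)
        · have hn := (hle.2.2.2 (by rcases ho with ⟨c, hc⟩; omega)).2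
          rw [simple1_succ i, simple3_succ i] at hn
          exact hn h.1
        · obtain ⟨hall, -⟩ := h
          have := hall (simple 2 i) (by simp) (simple 1 i) (by simp)
          rcases this with h' | ⟨-, h2⟩
          · exact N21 h'
          · exact h2 P12
      have g5 : ¬ pLt 1 (simple 2 (i+1)) (simple 3 (i+1)) := by
        rw [simple2_succ i, simple3_succ i, pLt_node_iff]
        rintro (h | h)
        · have hn := hle.1
          rw [simple2_succ i, simple3_succ i] at hn
          exact hn h.1
        · obtain ⟨hall, -⟩ := h
          have := hall (simple 3 i) (by simp) (simple 1 i) (by simp)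
          rcases this with h' | ⟨-, h2⟩
          · exact N31 h'
          · exact h2 P13
      have g6 : ¬ pLt 1 (simple 3 (i+1)) (simple 2 (i+1)) := by
        rw [simple3_succ i, simple2_succ i, pLt_node_iff]
        rintro (h | h)
        · have hn := hle.2.1
          rw [simple3_succ i, simple2_succ i] at hn
          exact hn h.1
        · obtain ⟨hall, -⟩ := h
          have := hall (simple 2 i) (by simp) (simple 1 i) (by simp)
          rcases this with h' | ⟨-, h2⟩
          · exact N21 h'
          · exact h2 P12
      exact ⟨fun _ => ⟨g1, g2, g3, g4⟩,
        fun hod => absurd (Nat.even_add_one.mpr (Nat.not_even_iff_odd.mpr ho)) (by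
          rcases hod with ⟨c, hc⟩
          exact fun hc2 => by rcases hc2 with ⟨d, hd⟩; omega), g5, g6⟩

end GV

/-- for even `i`, `2_i <ᴾ₁ 1_i` and `3_i <ᴾ₁ 1_i`; for odd `i`,
`1_i <ᴾ₁ 2_i` and `1_i <ᴾ₁ 3_i`. -/
theorem one_i_comparable_with_two_i_three_i :
    ∀ i : ℕ,
      (Even i → GV.pLt 1 (GV.simple 2 i) (GV.simple 1 i) ∧
        GV.pLt 1 (GV.simple 3 i) (GV.simple 1 i)) ∧
      (Odd i → GV.pLt 1 (GV.simple 1 i) (GV.simple 2 i) ∧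
        GV.pLt 1 (GV.simple 1 i) (GV.simple 3 i)) := by
  intro i
  obtain ⟨he, ho, -⟩ := GV.main_table i
  exact ⟨fun h => ⟨(he h).1, (he h).2.1⟩, fun h => ⟨(ho h).1, (ho h).2.1⟩⟩
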